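/- (Double robustness of the estimating function for (γ,η), case 𝓜₃: correct data-source propensity, arbitrary treatment propensity model.) Suppose E(Y | Z, X, R=1) = 𝓗(X)·τ(Z,X) + ω(X) a.s. for measurable functions 𝓗, ω, and P(D=1 | Z,X,R=0) = τ(Z,X) a.s. (propensity score equality). Let τ̄ : {0,1}×𝒳 → ℝ be an arbitrary measurable function. Then for every measurable function G : 𝒳×{0,1} → ℝ^k such that the integrand is integrable, E[ G(X,Z) · { R·[Y − 𝓗(X)·τ̄(Z,X) − ω(X)] − (1−R)·(π(Z,X)/(1−π(Z,X)))·𝓗(X)·[D − τ̄(Z,X)] } ] = 0. -/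

import Mathlib

/-!
Condition on `W = (Z, X)`. On `{R = 1}` the residual `Y - 𝓗 τ̄ - ω` has conditional mean
`𝓗 (τ - τ̄)` by the outcome model, and on `{R = 0}` the residual `D - τ̄` has conditional mean
`τ - τ̄` by propensity score equality. Since `P(R = 1 | W) = π`, the two parts of the estimating
function contribute `π 𝓗 (τ - τ̄) g(W)` and `(1 - π) (π / (1 - π)) 𝓗 (τ - τ̄) g(W)`, which cancel.
The individual terms of the estimating function need not be integrable, so this is done on events
`{W ∈ S}` on which the test function and all nuisance functions are bounded, and `S` then exhausts
`{0,1} × 𝒳`.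
-/

open MeasureTheory ProbabilityTheory Filter

section Conditioning

variable {Ω : Type*} {m m₀ : MeasurableSpace Ω} {μ : Measure Ω}

theorem setIntegral_eq_measureReal_mul_integral_cond [IsFiniteMeasure μ] (s : Set Ω)
    (f : Ω → ℝ) : ∫ ω in s, f ω ∂μ = μ.real s * ∫ ω, f ω ∂μ[|s] := by
  rcases eq_or_ne (μ s) 0 with hs | hs
  · simp [Measure.restrict_eq_zero.mpr hs, measureReal_def, hs]
  · rw [ProbabilityTheory.cond, integral_smul_measure, ENNReal.toReal_inv, smul_eq_mul,
      ← mul_assoc, measureReal_def,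
      mul_inv_cancel₀ (ENNReal.toReal_ne_zero.mpr ⟨hs, measure_ne_top μ s⟩), one_mul]

theorem MeasureTheory.Integrable.cond {f : Ω → ℝ} (hf : Integrable f μ) (s : Set Ω) :
    Integrable f μ[|s] := by
  rcases eq_or_ne (μ s) 0 with hs | hs
  · simp [cond_eq_zero_of_meas_eq_zero hs]
  · exact hf.restrict.smul_measure (ENNReal.inv_ne_top.mpr hs)

theorem integral_mul_condExp_of_bound (hm : m ≤ m₀) [IsFiniteMeasure μ] {v f : Ω → ℝ} {C : ℝ}
    (hv : StronglyMeasurable[m] v) (hvC : ∀ ω, |v ω| ≤ C) (hf : Integrable f μ) :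
    ∫ ω, v ω * f ω ∂μ = ∫ ω, v ω * μ[f|m] ω ∂μ := by
  rw [← integral_condExp hm]
  exact integral_congr_ae (condExp_stronglyMeasurable_mul_of_bound hm hv hf C (.of_forall hvC))

theorem setIntegral_eq_integral_condExp_indicator_mul (hm : m ≤ m₀) [IsFiniteMeasure μ]
    {s : Set Ω} (hs : MeasurableSet s) {u : Ω → ℝ} {C : ℝ} (hu : StronglyMeasurable[m] u)
    (huC : ∀ ω, |u ω| ≤ C) :
    ∫ ω in s, u ω ∂μ = ∫ ω, μ[s.indicator 1|m] ω * u ω ∂μ := by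
  have hind : Integrable (s.indicator (1 : Ω → ℝ)) μ := (integrable_const 1).indicator hs
  rw [← integral_indicator hs]
  simp_rw [mul_comm _ (u _), ← integral_mul_condExp_of_bound hm hu huC hind]
  congr with ω
  by_cases hω : ω ∈ s <;> simp [hω]

theorem condExp_indicator_compl_ae_eq (hm : m ≤ m₀) [IsFiniteMeasure μ] {s : Set Ω}
    (hs : MeasurableSet s) {p : Ω → ℝ} (hp : μ[s.indicator 1|m] =ᵐ[μ] p) :
    μ[sᶜ.indicator (1 : Ω → ℝ)|m] =ᵐ[μ] 1 - p := by
  have hind : Integrable (s.indicator (1 : Ω → ℝ)) μ := (integrable_const 1).indicator hs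
  rw [show sᶜ.indicator (1 : Ω → ℝ) = 1 - s.indicator 1 by
    ext ω; by_cases hω : ω ∈ s <;> simp [hω]]
  refine (condExp_sub (integrable_const 1) hind m).trans ?_
  rw [show (1 : Ω → ℝ) = fun _ => 1 from rfl, condExp_const hm]
  exact EventuallyEq.rfl.sub hp

theorem setIntegral_sub_mul_eq_integral_condExp_indicator_mul (hm : m ≤ m₀) [IsFiniteMeasure μ]
    {s : Set Ω} (hs : MeasurableSet s) {f f₁ a v : Ω → ℝ} (hf : Integrable f μ)
    (hcond : μ[|s][f|m] =ᵐ[μ[|s]] f₁) (hf₁ : StronglyMeasurable[m] f₁)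
    (ha : StronglyMeasurable[m] a) (hv : StronglyMeasurable[m] v)
    (hvC : ∃ C, ∀ ω, |v ω| ≤ C) (havC : ∃ C, ∀ ω, |a ω * v ω| ≤ C)
    (hf₁vC : ∃ C, ∀ ω, |f₁ ω * v ω| ≤ C) :
    ∫ ω in s, (f ω - a ω) * v ω ∂μ = ∫ ω, μ[s.indicator 1|m] ω * ((f₁ ω - a ω) * v ω) ∂μ := by
  obtain ⟨Cv, hCv⟩ := hvC
  obtain ⟨Ca, hCa⟩ := havC
  obtain ⟨Cf, hCf⟩ := hf₁vC
  have hbdd : ∀ {u : Ω → ℝ} {C : ℝ}, StronglyMeasurable[m] u → (∀ ω, |u ω| ≤ C) →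
      Integrable u μ[|s] := fun hu huC =>
    .of_bound (hu.mono hm).aestronglyMeasurable _ (.of_forall huC)
  have hav : Integrable (fun ω => a ω * v ω) μ[|s] := hbdd (ha.mul hv) hCa
  have hvf : ∫ ω, f ω * v ω ∂μ[|s] = ∫ ω, f₁ ω * v ω ∂μ[|s] := by
    simp_rw [mul_comm _ (v _)]
    refine (integral_mul_condExp_of_bound hm hv hCv (hf.cond s)).trans
      (integral_congr_ae ?_)
    filter_upwards [hcond] with ω h
    rw [h]
  have hswap : ∫ ω, (f ω - a ω) * v ω ∂μ[|s] = ∫ ω, (f₁ ω - a ω) * v ω ∂μ[|s] := by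
    simp_rw [sub_mul]
    rw [integral_sub ((hf.cond s).mul_bdd (hv.mono hm).aestronglyMeasurable (.of_forall hCv)) hav,
      integral_sub (hbdd (u := fun ω => f₁ ω * v ω) (hf₁.mul hv) hCf) hav, hvf]
  have hbound : ∀ ω, |(f₁ ω - a ω) * v ω| ≤ Cf + Ca := fun ω => by
    rw [sub_mul]; exact (abs_sub _ _).trans (add_le_add (hCf ω) (hCa ω))
  rw [setIntegral_eq_measureReal_mul_integral_cond, hswap,
    ← setIntegral_eq_measureReal_mul_integral_cond]
  exact setIntegral_eq_integral_condExp_indicator_mul hm hs ((hf₁.sub ha).mul hv) hbound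

end Conditioning

theorem Filter.BoundedAtFilter.exists_abs_indicator_le {β : Type*} {S : Set β} {u : β → ℝ}
    (h : BoundedAtFilter (𝓟 S) u) : ∃ C, ∀ p, |S.indicator u p| ≤ C := by
  obtain ⟨c, hc⟩ := h.bound
  rw [eventually_principal] at hc
  refine ⟨max c 0, fun p => ?_⟩
  by_cases hp : p ∈ S
  · rw [Set.indicator_of_mem hp]
    exact (by simpa using hc p hp : |u p| ≤ c).trans (le_max_left c 0)
  · simp [hp]

theorem Filter.BoundedAtFilter.exists_abs_mul_indicator_le {β : Type*} {S : Set β} {u g : β → ℝ}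
    (h : BoundedAtFilter (𝓟 S) (u * g)) : ∃ C, ∀ p, |u p * S.indicator g p| ≤ C := by
  simpa only [Pi.mul_def, Set.indicator_mul_right] using h.exists_abs_indicator_le

section BoundedOnPreimage

variable {Ω β : Type*} [MeasurableSpace Ω] [MeasurableSpace β] {μ : Measure Ω} {W : Ω → β}
  {S : Set β}

theorem integrable_sub_mul_indicator_comp [IsFiniteMeasure μ] (hW : Measurable W)
    (hS : MeasurableSet S) {f : Ω → ℝ} {a v : β → ℝ} (hf : Integrable f μ) (ha : Measurable a)
    (hv : Measurable v) (hv_bdd : BoundedAtFilter (𝓟 S) v)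
    (hav_bdd : BoundedAtFilter (𝓟 S) (a * v)) :
    Integrable (fun ω => (f ω - a (W ω)) * S.indicator v (W ω)) μ := by
  obtain ⟨Cv, hCv⟩ := hv_bdd.exists_abs_indicator_le
  obtain ⟨Ca, hCa⟩ := hav_bdd.exists_abs_mul_indicator_le
  have hvW : AEStronglyMeasurable (fun ω => S.indicator v (W ω)) μ :=
    ((hv.indicator hS).comp hW).aestronglyMeasurable
  simp_rw [sub_mul]
  exact (hf.mul_bdd hvW (.of_forall fun ω => hCv (W ω))).sub
    (.of_bound ((ha.comp hW).aestronglyMeasurable.mul hvW) Ca (.of_forall fun ω => hCa (W ω)))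

theorem setIntegral_sub_mul_indicator_comp_eq_integral_mul [IsFiniteMeasure μ]
    (hW : Measurable W) (hS : MeasurableSet S) {s : Set Ω} (hs : MeasurableSet s) {f : Ω → ℝ}
    {f₁ a v p : β → ℝ} (hf : Integrable f μ)
    (hcond : μ[|s][f|MeasurableSpace.comap W inferInstance] =ᵐ[μ[|s]] fun ω => f₁ (W ω))
    (hp : μ[s.indicator 1|MeasurableSpace.comap W inferInstance] =ᵐ[μ] fun ω => p (W ω))
    (hf₁ : Measurable f₁) (ha : Measurable a) (hv : Measurable v)
    (hv_bdd : BoundedAtFilter (𝓟 S) v) (hav_bdd : BoundedAtFilter (𝓟 S) (a * v))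
    (hf₁v_bdd : BoundedAtFilter (𝓟 S) (f₁ * v)) :
    ∫ ω in s, (f ω - a (W ω)) * S.indicator v (W ω) ∂μ =
      ∫ ω, p (W ω) * ((f₁ (W ω) - a (W ω)) * S.indicator v (W ω)) ∂μ := by
  have hcomp : ∀ {u : β → ℝ}, Measurable u →
      StronglyMeasurable[MeasurableSpace.comap W inferInstance] fun ω => u (W ω) :=
    fun hu => (hu.comp (comap_measurable W)).stronglyMeasurable
  have hbdd : ∀ {u : β → ℝ}, BoundedAtFilter (𝓟 S) (u * v) →
      ∃ C, ∀ ω, |u (W ω) * S.indicator v (W ω)| ≤ C := fun h =>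
    h.exists_abs_mul_indicator_le.imp fun _ hC ω => hC (W ω)
  rw [setIntegral_sub_mul_eq_integral_condExp_indicator_mul hW.comap_le hs hf hcond (hcomp hf₁)
    (hcomp ha) (hcomp (hv.indicator hS))
    (hv_bdd.exists_abs_indicator_le.imp fun _ hC ω => hC (W ω)) (hbdd hav_bdd) (hbdd hf₁v_bdd)]
  refine integral_congr_ae ?_
  filter_upwards [hp] with ω h
  rw [h]

theorem integral_eq_zero_of_forall_setIntegral_preimage_bounded {E : Type*}
    [NormedAddCommGroup E] [NormedSpace ℝ E] {ι : Type*} [Finite ι] (hW : Measurable W)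
    {F : ι → β → ℝ} (hF : ∀ i, Measurable (F i)) {f : Ω → E} (hf : Integrable f μ)
    (h : ∀ S : Set β, MeasurableSet S → (∀ i, BoundedAtFilter (𝓟 S) (F i)) →
      ∫ ω in W ⁻¹' S, f ω ∂μ = 0) :
    ∫ ω, f ω ∂μ = 0 := by
  set S : ℕ → Set β := fun n => {p | ∀ i, |F i p| ≤ n}
  have hS : ∀ n, MeasurableSet (S n) := fun n => by
    simp only [S, Set.ofPred_forall]
    exact .iInter fun i => measurableSet_le (hF i).abs measurable_const
  have hcover : ⋃ n, W ⁻¹' S n = Set.univ := by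
    refine Set.eq_univ_of_forall fun ω => Set.mem_iUnion.mpr ?_
    exact (eventually_all.mpr fun i =>
      (tendsto_natCast_atTop_atTop.eventually_ge_atTop |F i (W ω)|)).exists
  have hlim := tendsto_setIntegral_of_monotone (fun n => hW (hS n))
    (fun n k hnk ω hω i => (hω i).trans (by exact_mod_cast hnk))
    (by rw [hcover]; exact hf.integrableOn)
  rw [hcover, setIntegral_univ] at hlim
  refine tendsto_nhds_unique hlim (tendsto_const_nhds.congr fun n => ?_)
  refine (h (S n) (hS n) fun i => ?_).symm
  exact Asymptotics.IsBigO.of_bound n (eventually_principal.mpr fun p hp => by simpa using hp i)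

end BoundedOnPreimage

section DoublyRobust

variable {Ω 𝒳 : Type*} [MeasurableSpace Ω] [MeasurableSpace 𝒳]

noncomputable def drScore (R Z D : Ω → Bool) (X : Ω → 𝒳) (Y : Ω → ℝ) (Hfun wfun : 𝒳 → ℝ)
    (pi taubar : Bool → 𝒳 → ℝ) (ω : Ω) : ℝ :=
  (if R ω then (1:ℝ) else 0) * (Y ω - Hfun (X ω) * taubar (Z ω) (X ω) - wfun (X ω)) -
    (if R ω then (0:ℝ) else 1) * (pi (Z ω) (X ω) / (1 - pi (Z ω) (X ω))) *
      Hfun (X ω) * ((if D ω then (1:ℝ) else 0) - taubar (Z ω) (X ω))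

theorem setIntegral_drScore_mul_eq_sub {P : Measure Ω} {R Z D : Ω → Bool} {X : Ω → 𝒳}
    {Y : Ω → ℝ} {Hfun wfun : 𝒳 → ℝ} {pi taubar : Bool → 𝒳 → ℝ} {g : Bool × 𝒳 → ℝ}
    {S : Set (Bool × 𝒳)} (hR : Measurable R) (hW : Measurable fun ω => (Z ω, X ω))
    (hS : MeasurableSet S)
    (h₁ : Integrable (fun ω => (Y ω - (Hfun (X ω) * taubar (Z ω) (X ω) + wfun (X ω))) *
      S.indicator g (Z ω, X ω)) P)
    (h₀ : Integrable (fun ω => ((if D ω then (1:ℝ) else 0) - taubar (Z ω) (X ω)) *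
      S.indicator (fun p => pi p.1 p.2 / (1 - pi p.1 p.2) * Hfun p.2 * g p) (Z ω, X ω)) P) :
    ∫ ω in (fun ω => (Z ω, X ω)) ⁻¹' S,
        drScore R Z D X Y Hfun wfun pi taubar ω * g (Z ω, X ω) ∂P =
      (∫ ω in {ω | R ω = true}, (Y ω - (Hfun (X ω) * taubar (Z ω) (X ω) + wfun (X ω))) *
        S.indicator g (Z ω, X ω) ∂P) -
      ∫ ω in {ω | R ω = false}, ((if D ω then (1:ℝ) else 0) - taubar (Z ω) (X ω)) *
        S.indicator (fun p => pi p.1 p.2 / (1 - pi p.1 p.2) * Hfun p.2 * g p) (Z ω, X ω) ∂P := by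
  have hs₁ : MeasurableSet {ω | R ω = true} := hR (measurableSet_singleton true)
  have hs₀ : MeasurableSet {ω | R ω = false} := hR (measurableSet_singleton false)
  rw [← integral_indicator (hW hS), ← integral_indicator hs₁, ← integral_indicator hs₀,
    ← integral_sub (h₁.indicator hs₁) (h₀.indicator hs₀)]
  congr with ω
  classical
  simp only [drScore, Set.indicator_apply, Set.mem_preimage, Set.mem_ofPred_eq]
  by_cases hSω : (Z ω, X ω) ∈ S <;> rcases Bool.eq_false_or_eq_true (R ω) with hRω | hRω <;>
    simp only [hSω, hRω, Bool.false_eq_true, Bool.true_eq_false, ↓reduceIte] <;> ring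

theorem setIntegral_drScore_mul_eq_zero {P : Measure Ω} [IsProbabilityMeasure P]
    {R Z D : Ω → Bool} {X : Ω → 𝒳} {Y : Ω → ℝ}
    (hR : Measurable R) (hZ : Measurable Z) (hD : Measurable D) (hX : Measurable X)
    (hYint : Integrable Y P)
    {tau : Bool → 𝒳 → ℝ} (htau_meas : Measurable fun p : Bool × 𝒳 => tau p.1 p.2)
    {pi : Bool → 𝒳 → ℝ} (hpi_meas : Measurable fun p : Bool × 𝒳 => pi p.1 p.2)
    (hpi_ver : (fun ω => pi (Z ω) (X ω)) =ᵐ[P]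
      P[(fun ω => if R ω then (1:ℝ) else 0) |
        MeasurableSpace.comap (fun ω => (Z ω, X ω)) inferInstance])
    (hpi_pos : ∀ᵐ ω ∂P, 0 < pi (Z ω) (X ω) ∧ pi (Z ω) (X ω) < 1)
    {Hfun wfun : 𝒳 → ℝ} (hHfun_meas : Measurable Hfun) (hwfun_meas : Measurable wfun)
    (hout : (P[|{ω | R ω = true}])[Y |
        MeasurableSpace.comap (fun ω => (Z ω, X ω)) inferInstance]
      =ᵐ[P[|{ω | R ω = true}]]
        fun ω => Hfun (X ω) * tau (Z ω) (X ω) + wfun (X ω))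
    (hpse : (fun ω => tau (Z ω) (X ω)) =ᵐ[P[|{ω | R ω = false}]]
      (P[|{ω | R ω = false}])[(fun ω => if D ω then (1:ℝ) else 0) |
        MeasurableSpace.comap (fun ω => (Z ω, X ω)) inferInstance])
    {taubar : Bool → 𝒳 → ℝ} (htaubar_meas : Measurable fun p : Bool × 𝒳 => taubar p.1 p.2)
    {g : Bool × 𝒳 → ℝ} (hg : Measurable g) {S : Set (Bool × 𝒳)} (hS : MeasurableSet S)
    (hg_bdd : BoundedAtFilter (𝓟 S) g)
    (hH_bdd : BoundedAtFilter (𝓟 S) fun p : Bool × 𝒳 => Hfun p.2)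
    (htau_bdd : BoundedAtFilter (𝓟 S) fun p : Bool × 𝒳 => tau p.1 p.2)
    (htaubar_bdd : BoundedAtFilter (𝓟 S) fun p : Bool × 𝒳 => taubar p.1 p.2)
    (hw_bdd : BoundedAtFilter (𝓟 S) fun p : Bool × 𝒳 => wfun p.2)
    (hρ_bdd : BoundedAtFilter (𝓟 S) fun p : Bool × 𝒳 => pi p.1 p.2 / (1 - pi p.1 p.2)) :
    ∫ ω in (fun ω => (Z ω, X ω)) ⁻¹' S,
      drScore R Z D X Y Hfun wfun pi taubar ω * g (Z ω, X ω) ∂P = 0 := by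
  have hW : Measurable fun ω => (Z ω, X ω) := hZ.prodMk hX
  have hs₁ : MeasurableSet {ω | R ω = true} := hR (measurableSet_singleton true)
  have hs₀ : MeasurableSet {ω | R ω = false} := hR (measurableSet_singleton false)
  have hD₁ : Integrable (fun ω => if D ω then (1:ℝ) else 0) P :=
    .of_bound (Measurable.ite (hD (measurableSet_singleton true)) measurable_const
      measurable_const).aestronglyMeasurable 1 (.of_forall fun ω => by split <;> simp)
  have hH : Measurable fun p : Bool × 𝒳 => Hfun p.2 := hHfun_meas.comp measurable_snd
  have hw : Measurable fun p : Bool × 𝒳 => wfun p.2 := hwfun_meas.comp measurable_snd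
  have hρH : Measurable fun p : Bool × 𝒳 => pi p.1 p.2 / (1 - pi p.1 p.2) * Hfun p.2 :=
    (hpi_meas.div (measurable_const.sub hpi_meas)).mul hH
  have hρHg_bdd := (hρ_bdd.mul hH_bdd).mul hg_bdd
  have hp₁ : P[{ω | R ω = true}.indicator 1|
      MeasurableSpace.comap (fun ω => (Z ω, X ω)) inferInstance] =ᵐ[P] fun ω => pi (Z ω) (X ω) := by
    convert hpi_ver.symm using 2
    ext ω; by_cases h : R ω <;> simp [h]
  have hp₀ : P[{ω | R ω = false}.indicator 1|
      MeasurableSpace.comap (fun ω => (Z ω, X ω)) inferInstance]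
      =ᵐ[P] fun ω => 1 - pi (Z ω) (X ω) := by
    rw [show {ω | R ω = false} = {ω | R ω = true}ᶜ by ext ω; simp]
    exact condExp_indicator_compl_ae_eq hW.comap_le hs₁ hp₁
  have h₁ := setIntegral_sub_mul_indicator_comp_eq_integral_mul hW hS hs₁ hYint
    (f₁ := fun p => Hfun p.2 * tau p.1 p.2 + wfun p.2)
    (a := fun p => Hfun p.2 * taubar p.1 p.2 + wfun p.2) (p := fun p => pi p.1 p.2) hout hp₁
    ((hH.mul htau_meas).add hw) ((hH.mul htaubar_meas).add hw) hg hg_bdd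
    (((hH_bdd.mul htaubar_bdd).add hw_bdd).mul hg_bdd)
    (((hH_bdd.mul htau_bdd).add hw_bdd).mul hg_bdd)
  have h₀ := setIntegral_sub_mul_indicator_comp_eq_integral_mul hW hS hs₀ hD₁
    (f₁ := fun p => tau p.1 p.2) (a := fun p => taubar p.1 p.2)
    (p := fun p => 1 - pi p.1 p.2) hpse.symm hp₀
    htau_meas htaubar_meas (hρH.mul hg) hρHg_bdd (htaubar_bdd.mul hρHg_bdd)
    (htau_bdd.mul hρHg_bdd)
  rw [setIntegral_drScore_mul_eq_sub hR hW hS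
    (integrable_sub_mul_indicator_comp hW hS hYint ((hH.mul htaubar_meas).add hw) hg hg_bdd
      (((hH_bdd.mul htaubar_bdd).add hw_bdd).mul hg_bdd))
    (integrable_sub_mul_indicator_comp hW hS hD₁ htaubar_meas (hρH.mul hg) hρHg_bdd
      (htaubar_bdd.mul hρHg_bdd)), sub_eq_zero]
  refine h₁.trans ((integral_congr_ae ?_).trans h₀.symm)
  filter_upwards [hpi_pos] with ω hω
  by_cases hSω : (Z ω, X ω) ∈ S
  · have : 1 - pi (Z ω) (X ω) ≠ 0 := (sub_pos.mpr hω.2).ne'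
    simp only [Set.indicator_of_mem hSω, Pi.mul_apply]
    field_simp
    ring
  · simp [Set.indicator_of_notMem hSω]

end DoublyRobust

theorem stmt_14_general
    {Ω 𝒳 : Type*} [MeasurableSpace Ω] [MeasurableSpace 𝒳]
    (P : Measure Ω) [IsProbabilityMeasure P]
    (R Z D : Ω → Bool) (X : Ω → 𝒳) (Y : Ω → ℝ)
    (hR : Measurable R) (hZ : Measurable Z) (hD : Measurable D)
    (hX : Measurable X) (hYint : Integrable Y P)
    -- τ(z,x) := P(D=1 | Z=z, X=x, R=1)
    (tau : Bool → 𝒳 → ℝ) (htau_meas : Measurable fun p : Bool × 𝒳 => tau p.1 p.2)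
    -- π(z,x) := P(R=1 | Z=z, X=x), with 0 < π(Z,X) < 1 a.s.
    (pi : Bool → 𝒳 → ℝ) (hpi_meas : Measurable fun p : Bool × 𝒳 => pi p.1 p.2)
    (hpi_ver : (fun ω => pi (Z ω) (X ω)) =ᵐ[P]
      P[(fun ω => if R ω then (1:ℝ) else 0) |
        MeasurableSpace.comap (fun ω => (Z ω, X ω)) inferInstance])
    (hpi_pos : ∀ᵐ ω ∂P, 0 < pi (Z ω) (X ω) ∧ pi (Z ω) (X ω) < 1)
    -- outcome decomposition: E(Y | Z, X, R=1) = 𝓗(X)·τ(Z,X) + ω(X) a.s.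
    (Hfun wfun : 𝒳 → ℝ) (hHfun_meas : Measurable Hfun) (hwfun_meas : Measurable wfun)
    (hout : (P[|{ω | R ω = true}])[Y |
        MeasurableSpace.comap (fun ω => (Z ω, X ω)) inferInstance]
      =ᵐ[P[|{ω | R ω = true}]]
        fun ω => Hfun (X ω) * tau (Z ω) (X ω) + wfun (X ω))
    -- propensity score equality: P(D=1 | Z, X, R=0) = τ(Z,X) a.s.
    (hpse : (fun ω => tau (Z ω) (X ω)) =ᵐ[P[|{ω | R ω = false}]]
      (P[|{ω | R ω = false}])[(fun ω => if D ω then (1:ℝ) else 0) |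
        MeasurableSpace.comap (fun ω => (Z ω, X ω)) inferInstance])
    -- arbitrary measurable working model τ̄ : {0,1}×𝒳 → ℝ
    (taubar : Bool → 𝒳 → ℝ) (htaubar_meas : Measurable fun p : Bool × 𝒳 => taubar p.1 p.2)
    -- arbitrary measurable G : 𝒳×{0,1} → ℝ^k with integrable integrand
    (k : ℕ) (G : 𝒳 × Bool → EuclideanSpace ℝ (Fin k)) (hG : Measurable G)
    (hint : Integrable (fun ω =>
        ((if R ω then (1:ℝ) else 0) *
            (Y ω - Hfun (X ω) * taubar (Z ω) (X ω) - wfun (X ω)) -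
          (if R ω then (0:ℝ) else 1) * (pi (Z ω) (X ω) / (1 - pi (Z ω) (X ω))) *
            Hfun (X ω) * ((if D ω then (1:ℝ) else 0) - taubar (Z ω) (X ω))) • G (X ω, Z ω)) P) :
    ∫ ω, ((if R ω then (1:ℝ) else 0) *
            (Y ω - Hfun (X ω) * taubar (Z ω) (X ω) - wfun (X ω)) -
          (if R ω then (0:ℝ) else 1) * (pi (Z ω) (X ω) / (1 - pi (Z ω) (X ω))) *
            Hfun (X ω) * ((if D ω then (1:ℝ) else 0) - taubar (Z ω) (X ω))) • G (X ω, Z ω) ∂P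
      = 0 := by
  ext i
  have hg : Measurable fun p : Bool × 𝒳 => G (p.2, p.1) i :=
    ((PiLp.continuous_apply 2 _ i).measurable.comp hG).comp measurable_swap
  have hF : ∀ j, Measurable (![fun p : Bool × 𝒳 => G (p.2, p.1) i, fun p => Hfun p.2,
      fun p => tau p.1 p.2, fun p => taubar p.1 p.2, fun p => wfun p.2,
      fun p => pi p.1 p.2 / (1 - pi p.1 p.2)] j) := by
    simp only [Fin.forall_fin_succ]
    exact ⟨hg, hHfun_meas.comp measurable_snd, htau_meas, htaubar_meas,
      hwfun_meas.comp measurable_snd, hpi_meas.div (measurable_const.sub hpi_meas),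
      fun j => j.elim0⟩
  rw [eval_integral_piLp hint.eval_piLp, PiLp.zero_apply]
  simp only [PiLp.smul_apply, smul_eq_mul]
  refine integral_eq_zero_of_forall_setIntegral_preimage_bounded (hZ.prodMk hX) hF
    (by simpa using hint.eval_piLp i) fun S hS hbdd => ?_
  exact setIntegral_drScore_mul_eq_zero hR hZ hD hX hYint htau_meas hpi_meas hpi_ver hpi_pos
    hHfun_meas hwfun_meas hout hpse htaubar_meas hg hS (hbdd 0) (hbdd 1) (hbdd 2) (hbdd 3)
    (hbdd 4) (hbdd 5)

/-- Double robustness of the (γ,η) estimating function, case 𝓜₃: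
correct data-source propensity `π` and outcome decomposition, arbitrary treatment propensity
working model `τ̄ : {0,1}×𝒳 → ℝ`. Then for every measurable `G : 𝒳×{0,1} → ℝ^k` with
integrable integrand,
`E[ G(X,Z)·{ R·[Y − 𝓗(X)τ̄(Z,X) − ω(X)] − (1−R)·(π(Z,X)/(1−π(Z,X)))·𝓗(X)·[D − τ̄(Z,X)] } ] = 0`. -/
theorem stmt_14
    {Ω 𝒳 : Type*} [MeasurableSpace Ω] [MeasurableSpace 𝒳] [StandardBorelSpace 𝒳]
    (P : Measure Ω) [IsProbabilityMeasure P]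
    (R Z D : Ω → Bool) (X : Ω → 𝒳) (Y : Ω → ℝ)
    (hR : Measurable R) (hZ : Measurable Z) (hD : Measurable D)
    (hX : Measurable X) (hY : Measurable Y) (hYint : Integrable Y P)
    -- τ(z,x) := P(D=1 | Z=z, X=x, R=1)
    (tau : Bool → 𝒳 → ℝ) (htau_meas : Measurable fun p : Bool × 𝒳 => tau p.1 p.2)
    (htau_ver : (fun ω => tau (Z ω) (X ω)) =ᵐ[P[|{ω | R ω = true}]]
      (P[|{ω | R ω = true}])[(fun ω => if D ω then (1:ℝ) else 0) |
        MeasurableSpace.comap (fun ω => (Z ω, X ω)) inferInstance])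
    -- π(z,x) := P(R=1 | Z=z, X=x), with 0 < π(Z,X) < 1 a.s.
    (pi : Bool → 𝒳 → ℝ) (hpi_meas : Measurable fun p : Bool × 𝒳 => pi p.1 p.2)
    (hpi_ver : (fun ω => pi (Z ω) (X ω)) =ᵐ[P]
      P[(fun ω => if R ω then (1:ℝ) else 0) |
        MeasurableSpace.comap (fun ω => (Z ω, X ω)) inferInstance])
    (hpi_pos : ∀ᵐ ω ∂P, 0 < pi (Z ω) (X ω) ∧ pi (Z ω) (X ω) < 1)
    -- outcome decomposition: E(Y | Z, X, R=1) = 𝓗(X)·τ(Z,X) + ω(X) a.s.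
    (Hfun wfun : 𝒳 → ℝ) (hHfun_meas : Measurable Hfun) (hwfun_meas : Measurable wfun)
    (hout : (P[|{ω | R ω = true}])[Y |
        MeasurableSpace.comap (fun ω => (Z ω, X ω)) inferInstance]
      =ᵐ[P[|{ω | R ω = true}]]
        fun ω => Hfun (X ω) * tau (Z ω) (X ω) + wfun (X ω))
    -- propensity score equality: P(D=1 | Z, X, R=0) = τ(Z,X) a.s.
    (hpse : (fun ω => tau (Z ω) (X ω)) =ᵐ[P[|{ω | R ω = false}]]
      (P[|{ω | R ω = false}])[(fun ω => if D ω then (1:ℝ) else 0) |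
        MeasurableSpace.comap (fun ω => (Z ω, X ω)) inferInstance])
    -- arbitrary measurable working model τ̄ : {0,1}×𝒳 → ℝ
    (taubar : Bool → 𝒳 → ℝ) (htaubar_meas : Measurable fun p : Bool × 𝒳 => taubar p.1 p.2)
    -- arbitrary measurable G : 𝒳×{0,1} → ℝ^k with integrable integrand
    (k : ℕ) (G : 𝒳 × Bool → EuclideanSpace ℝ (Fin k)) (hG : Measurable G)
    (hint : Integrable (fun ω =>
        ((if R ω then (1:ℝ) else 0) *
            (Y ω - Hfun (X ω) * taubar (Z ω) (X ω) - wfun (X ω)) -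
          (if R ω then (0:ℝ) else 1) * (pi (Z ω) (X ω) / (1 - pi (Z ω) (X ω))) *
            Hfun (X ω) * ((if D ω then (1:ℝ) else 0) - taubar (Z ω) (X ω))) • G (X ω, Z ω)) P) :
    ∫ ω, ((if R ω then (1:ℝ) else 0) *
            (Y ω - Hfun (X ω) * taubar (Z ω) (X ω) - wfun (X ω)) -
          (if R ω then (0:ℝ) else 1) * (pi (Z ω) (X ω) / (1 - pi (Z ω) (X ω))) *
            Hfun (X ω) * ((if D ω then (1:ℝ) else 0) - taubar (Z ω) (X ω))) • G (X ω, Z ω) ∂P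
      = 0 :=
  stmt_14_general P R Z D X Y hR hZ hD hX hYint tau htau_meas pi hpi_meas hpi_ver hpi_pos Hfun wfun
    hHfun_meas hwfun_meas hout hpse taubar htaubar_meas k G hG hint
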